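/- Let q be an odd prime power, F a finite field with |F| = q, and n ≥ 1. Then the 2-rank of the special linear group SL_{2n}(F) equals 2n − 1, i.e. r_2(SL_{2n}(F)) = 2n − 1. -/

import Mathlib

/-- A subgroup `H` is elementary abelian for the prime `p` if it is abelian and every
element `x ∈ H` satisfies `x ^ p = 1`. -/
def IsElementaryAbelian (p : ℕ) {G : Type*} [Group G] (H : Subgroup G) : Prop :=
  (∀ x ∈ H, ∀ y ∈ H, x * y = y * x) ∧ ∀ x ∈ H, x ^ p = 1

/-- `r_p(G)`: the maximal rank (`log_p` of the order) of an elementary abelian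
`p`-subgroup of `G`. -/
noncomputable def pRank (p : ℕ) (G : Type*) [Group G] : ℕ :=
  sSup {n | ∃ H : Subgroup G, IsElementaryAbelian p H ∧ Nat.card H = p ^ n}

/-- `nr_p(G)`: the maximal rank of a normal elementary abelian `p`-subgroup of `G`. -/
noncomputable def pNormalRank (p : ℕ) (G : Type*) [Group G] : ℕ :=
  sSup {n | ∃ H : Subgroup G, H.Normal ∧ IsElementaryAbelian p H ∧ Nat.card H = p ^ n}

/-!
An elementary abelian 2-subgroup `H` of `SL_m(F)`, `char F ≠ 2`, consists of commuting
involutions; these are semisimple with eigenvalues `±1`, so they are simultaneously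
diagonalizable. Reading off the diagonal embeds `H` into the group of sign vectors
`ε ∈ {±1}^m` with `∏ εᵢ = 1` (the determinant), which has order `2^(m-1)`; conversely the
diagonal matrices with these signs form such a subgroup. Every elementary abelian 2-subgroup
of a finite group lies in a conjugate of any Sylow 2-subgroup, so the rank of `P` is that of
`SL_m(F)`.
-/

open Module

namespace Module.End

variable {F V : Type*} [Field F] [AddCommGroup V] [Module F V] {f : End F V}

open Polynomial in
lemma isSemisimple_of_sq_eq_one (hF : ringChar F ≠ 2) (hf : f ^ 2 = 1) : f.IsSemisimple := by
  have hsep : (X ^ 2 - C 1 : F[X]).Separable :=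
    separable_X_pow_sub_C 1 (by exact_mod_cast Ring.two_ne_zero hF) one_ne_zero
  exact isSemisimple_of_squarefree_aeval_eq_zero hsep.squarefree (by simp [hf])

lemma iSup_eigenspace_eq_top_of_sq_eq_one (hF : ringChar F ≠ 2) (hf : f ^ 2 = 1) :
    ⨆ μ, f.eigenspace μ = ⊤ := by
  have htwo : (2 : F) ≠ 0 := Ring.two_ne_zero hF
  have hff (x : V) : f (f x) = x := by simpa [sq] using LinearMap.congr_fun hf x
  refine eq_top_iff.mpr fun x _ ↦ ?_
  have hplus : (2 : F)⁻¹ • (x + f x) ∈ f.eigenspace 1 := by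
    rw [mem_eigenspace_iff, map_smul, map_add, hff, add_comm, one_smul]
  have hminus : (2 : F)⁻¹ • (x - f x) ∈ f.eigenspace (-1) := by
    rw [mem_eigenspace_iff, map_smul, map_sub, hff, neg_one_smul, ← smul_neg, neg_sub]
  have hx : (2 : F)⁻¹ • (x + f x) + (2 : F)⁻¹ • (x - f x) = x := by
    rw [← smul_add, add_add_sub_cancel, ← two_smul F, smul_smul, inv_mul_cancel₀ htwo,
      one_smul]
  rw [← hx]
  exact Submodule.add_mem _ (Submodule.mem_iSup_of_mem 1 hplus)
    (Submodule.mem_iSup_of_mem (-1) hminus)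

lemma det_eq_prod_of_apply_basis_eq_smul {κ : Type*} [Fintype κ] [DecidableEq κ]
    (B : Basis κ F V) {μ : κ → F} (h : ∀ k, f (B k) = μ k • B k) :
    f.det = ∏ k, μ k := by
  have : LinearMap.toMatrix B B f = Matrix.diagonal μ := by
    ext i j
    rcases eq_or_ne i j with rfl | hij <;>
      simp [LinearMap.toMatrix_apply, *]
  rw [← LinearMap.det_toMatrix B, this, Matrix.det_diagonal]

variable [FiniteDimensional F V]

theorem exists_basis_forall_apply_eq_smul_of_commute_of_sq_eq_one {ι : Type*}
    (hF : ringChar F ≠ 2) (f : ι → End F V) (hcomm : ∀ i j, Commute (f i) (f j))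
    (hsq : ∀ i, f i ^ 2 = 1) :
    ∃ B : Basis (Fin (finrank F V)) F V, ∀ i k, ∃ μ : F, f i (B k) = μ • B k := by
  classical
  have hgen (i : ι) (μ : F) : (f i).maxGenEigenspace μ = (f i).eigenspace μ :=
    (isSemisimple_of_sq_eq_one hF (hsq i)).isFinitelySemisimple.maxGenEigenspace_eq_eigenspace μ
  have hInternal :
      DirectSum.IsInternal fun χ : ι → F ↦ ⨅ i, (f i).maxGenEigenspace (χ i) := by
    refine (DirectSum.isInternal_submodule_iff_iSupIndep_and_iSup_eq_top _).mpr ⟨?_, ?_⟩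
    · exact independent_iInf_maxGenEigenspace_of_forall_mapsTo f
        fun i j μ ↦ mapsTo_maxGenEigenspace_of_comm (hcomm j i) μ
    · refine iSup_iInf_maxGenEigenspace_eq_top_of_iSup_maxGenEigenspace_eq_top_of_commute f
        (fun i j _ ↦ hcomm i j) fun i ↦ ?_
      simp only [hgen]
      exact iSup_eigenspace_eq_top_of_sq_eq_one hF (hsq i)
  let B := hInternal.collectedBasis fun χ ↦ Basis.ofVectorSpace F _
  refine ⟨B.reindex (B.indexEquiv (finBasis F V)), fun i k ↦ ?_⟩
  set b := (B.indexEquiv (finBasis F V)).symm k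
  have hb : B b ∈ (f i).eigenspace (b.1 i) := by
    rw [← hgen]
    exact iInf_le (fun j ↦ (f j).maxGenEigenspace (b.1 j)) i (hInternal.collectedBasis_mem _ b)
  exact ⟨b.1 i, by simpa using mem_eigenspace_iff.mp hb⟩

end Module.End

def prodKer (ι A : Type*) [Fintype ι] [CommGroup A] : Subgroup (ι → A) :=
  (∏ i, Pi.evalMonoidHom (fun _ : ι ↦ A) i).ker

section prodKer

variable {ι A : Type*} [Fintype ι] [CommGroup A]

lemma mem_prodKer {v : ι → A} : v ∈ prodKer ι A ↔ ∏ i, v i = 1 := by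
  simp [prodKer, MonoidHom.finsetProd_apply]

lemma card_prodKer [Nonempty ι] [Finite A] :
    Nat.card (prodKer ι A) = Nat.card A ^ (Fintype.card ι - 1) := by
  classical
  set π := ∏ i, Pi.evalMonoidHom (fun _ : ι ↦ A) i
  have hsurj : Function.Surjective π := fun a ↦
    ⟨Pi.mulSingle (Classical.arbitrary ι) a, by simp [π, MonoidHom.finsetProd_apply]⟩
  have hcard := Subgroup.card_eq_card_quotient_mul_card_subgroup π.ker
  rw [Nat.card_congr (QuotientGroup.quotientKerEquivOfSurjective π hsurj).toEquiv, Nat.card_pi,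
    Finset.prod_const, Finset.card_univ, ← Nat.sub_add_cancel Fintype.card_pos,
    pow_succ'] at hcard
  exact (Nat.eq_of_mul_eq_mul_left Nat.card_pos hcard).symm

end prodKer

lemma card_rootsOfUnity_two {F : Type*} [Field F] (hF : ringChar F ≠ 2) :
    Nat.card (rootsOfUnity 2 F) = 2 :=
  have := ringChar.charP F
  (IsPrimitiveRoot.neg_one (ringChar F) hF).card_rootsOfUnity

theorem exists_injective_monoidHom_prodKer_rootsOfUnity {F V G : Type*} [Field F]
    [AddCommGroup V] [Module F V] [FiniteDimensional F V] [Group G] (hF : ringChar F ≠ 2)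
    (hcomm : ∀ a b : G, Commute a b) (hsq : ∀ g : G, g ^ 2 = 1)
    (ρ : G →* Module.End F V) (hρ : Function.Injective ρ) (hdet : ∀ g, (ρ g).det = 1) :
    ∃ φ : G →* prodKer (Fin (finrank F V)) (rootsOfUnity 2 F), Function.Injective φ := by
  obtain ⟨B, hB⟩ := Module.End.exists_basis_forall_apply_eq_smul_of_commute_of_sq_eq_one hF ρ
    (fun a b ↦ (hcomm a b).map ρ) fun g ↦ by rw [← map_pow, hsq, map_one]
  choose μ hμ using hB
  have hμ_eq {g k c} (h : ρ g (B k) = c • B k) : μ g k = c :=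
    smul_left_injective F (B.ne_zero k) ((hμ g k).symm.trans h)
  let χ (k : Fin (finrank F V)) : G →* F :=
    { toFun g := μ g k
      map_one' := hμ_eq (by rw [map_one, Module.End.one_apply, one_smul])
      map_mul' a b := hμ_eq (by
        rw [map_mul, Module.End.mul_apply, hμ, map_smul, hμ, smul_smul, mul_comm]) }
  have hχ_sq (k) (g : G) : (χ k).toHomUnits g ∈ rootsOfUnity 2 F := by
    rw [mem_rootsOfUnity', MonoidHom.coe_toHomUnits, ← map_pow, hsq, map_one]
  let φ : G →* (Fin (finrank F V) → rootsOfUnity 2 F) :=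
    MonoidHom.pi fun k ↦ (χ k).toHomUnits.codRestrict _ (hχ_sq k)
  have hφ_prod (g : G) : φ g ∈ prodKer _ _ := by
    rw [mem_prodKer, ← Subtype.val_inj, ← Units.val_inj]
    simpa [φ, χ, Subgroup.val_finsetProd,
      ← Module.End.det_eq_prod_of_apply_basis_eq_smul B (hμ g)] using hdet g
  refine ⟨φ.codRestrict _ hφ_prod, fun a b hab ↦ hρ (B.ext fun k ↦ ?_)⟩
  have : μ a k = μ b k := by
    simpa [φ, χ] using congrArg (fun v ↦ ((v.1 k : Fˣ) : F)) hab
  rw [hμ, hμ, this]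

section Rank

variable {p : ℕ} {G G' : Type*} [Group G] [Group G']

lemma IsElementaryAbelian.map {H : Subgroup G} (hH : IsElementaryAbelian p H) (f : G →* G') :
    IsElementaryAbelian p (H.map f) := by
  refine ⟨?_, ?_⟩
  · rintro _ ⟨x, hx, rfl⟩ _ ⟨y, hy, rfl⟩
    rw [← map_mul, ← map_mul, hH.1 x hx y hy]
  · rintro _ ⟨x, hx, rfl⟩
    rw [← map_pow, hH.2 x hx, map_one]

lemma IsElementaryAbelian.comap {H : Subgroup G'} (hH : IsElementaryAbelian p H) {f : G →* G'}
    (hf : Function.Injective f) : IsElementaryAbelian p (H.comap f) :=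
  ⟨fun x hx y hy ↦ hf (by rw [map_mul, map_mul, hH.1 _ hx _ hy]),
    fun x hx ↦ hf (by rw [map_pow, hH.2 _ hx, map_one])⟩

lemma pRank_eq_of_forall_card_le (hp : 1 < p) {k : ℕ}
    (hex : ∃ H : Subgroup G, IsElementaryAbelian p H ∧ Nat.card H = p ^ k)
    (hle : ∀ H : Subgroup G, IsElementaryAbelian p H → Nat.card H ≤ p ^ k) : pRank p G = k :=
  IsGreatest.csSup_eq ⟨hex, fun _ ⟨H, hH, hcard⟩ ↦
    (Nat.pow_le_pow_iff_right hp).mp (hcard ▸ hle H hH)⟩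

lemma pRank_sylow [Fact p.Prime] [Finite G] (P : Sylow p G) : pRank p P = pRank p G := by
  unfold pRank
  congr 1
  ext n
  constructor
  · rintro ⟨H, hH, hcard⟩
    exact ⟨H.map (P : Subgroup G).subtype, hH.map _, (Subgroup.card_subtype _ H).trans hcard⟩
  · rintro ⟨H, hH, hcard⟩
    obtain ⟨Q, hHQ⟩ := (IsPGroup.of_card hcard).exists_le_sylow
    obtain ⟨g, rfl⟩ := MulAction.exists_smul_eq G Q P
    set K := H.map (MulAut.conj g).toMonoidHom
    have hKP : K ≤ ((g • Q : Sylow p G) : Subgroup G) := Subgroup.map_mono hHQ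
    refine ⟨K.subgroupOf _, (hH.map _).comap (Subgroup.subtype_injective _), ?_⟩
    rw [Nat.card_congr (Subgroup.subgroupOfEquivOfLe hKP).toEquiv,
      Subgroup.card_map_of_injective (MulAut.conj g).injective, hcard]

end Rank

section SpecialLinearGroup

open Matrix

variable {ι F : Type*} [Fintype ι] [DecidableEq ι] [Field F]

def diagonalSL : prodKer ι (rootsOfUnity 2 F) →* SpecialLinearGroup ι F where
  toFun v := ⟨diagonal fun i ↦ ((v.1 i : Fˣ) : F), by
    rw [det_diagonal]
    simpa [← Subtype.val_inj, ← Units.val_inj, Subgroup.val_finsetProd]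
      using mem_prodKer.mp v.2⟩
  map_one' := Subtype.ext (by simp)
  map_mul' a b := Subtype.ext <| by
    simp only [Subgroup.coe_mul, Pi.mul_apply, Units.val_mul]
    exact (diagonal_mul_diagonal _ _).symm

lemma diagonalSL_injective : Function.Injective (diagonalSL (ι := ι) (F := F)) := by
  intro a b hab
  have := diagonal_injective (congrArg Subtype.val hab)
  ext i : 3
  exact Units.val_injective (congrFun this i)

lemma card_range_diagonalSL [Nonempty ι] (hF : ringChar F ≠ 2) :
    Nat.card (diagonalSL (ι := ι) (F := F)).range = 2 ^ (Fintype.card ι - 1) := by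
  rw [← Nat.card_congr (MonoidHom.ofInjective diagonalSL_injective).toEquiv, card_prodKer,
    card_rootsOfUnity_two hF]

lemma isElementaryAbelian_range_diagonalSL :
    IsElementaryAbelian 2 (diagonalSL (ι := ι) (F := F)).range := by
  rw [MonoidHom.range_eq_map]
  refine IsElementaryAbelian.map ⟨fun x _ y _ ↦ mul_comm x y, fun v _ ↦ ?_⟩ _
  ext i : 3
  exact (mem_rootsOfUnity 2 _).mp (v.1 i).2

lemma card_le_of_isElementaryAbelian [Nonempty ι] (hF : ringChar F ≠ 2)
    {H : Subgroup (SpecialLinearGroup ι F)} (hH : IsElementaryAbelian 2 H) :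
    Nat.card H ≤ 2 ^ (Fintype.card ι - 1) := by
  let ρ : H →* Module.End F (ι → F) :=
    (toLinAlgEquiv' : Matrix ι ι F ≃ₐ[F] Module.End F (ι → F)).toMonoidHom.comp
      (SpecialLinearGroup.coeMonoidHom.comp H.subtype)
  have hρ : Function.Injective ρ := toLinAlgEquiv'.injective.comp
    (SpecialLinearGroup.coeMonoidHom_injective.comp H.subtype_injective)
  obtain ⟨φ, hφ⟩ := exists_injective_monoidHom_prodKer_rootsOfUnity hF
    (fun a b ↦ Subtype.ext (hH.1 _ a.2 _ b.2)) (fun g ↦ Subtype.ext (hH.2 _ g.2)) ρ hρ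
    fun g ↦ (LinearMap.det_toLin' _).trans g.1.2
  have : Nonempty (Fin (finrank F (ι → F))) :=
    ⟨⟨0, by rw [finrank_fintype_fun_eq_card]; exact Fintype.card_pos⟩⟩
  calc Nat.card H ≤ Nat.card (prodKer (Fin (finrank F (ι → F))) (rootsOfUnity 2 F)) :=
        Nat.card_le_card_of_injective φ hφ
    _ = 2 ^ (Fintype.card ι - 1) := by
        rw [card_prodKer, card_rootsOfUnity_two hF, Fintype.card_fin, finrank_fintype_fun_eq_card]

theorem pRank_specialLinearGroup [Nonempty ι] (hF : ringChar F ≠ 2) :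
    pRank 2 (SpecialLinearGroup ι F) = Fintype.card ι - 1 :=
  pRank_eq_of_forall_card_le one_lt_two
    ⟨_, isElementaryAbelian_range_diagonalSL, card_range_diagonalSL hF⟩
    fun _ ↦ card_le_of_isElementaryAbelian hF

end SpecialLinearGroup

theorem rank_SL_general (q n : ℕ) (hn : 1 ≤ n) (F : Type*) [Field F] [Fintype F]
    (hc : Fintype.card F = q) (hq : Odd q)
    (P : Sylow 2 (Matrix.SpecialLinearGroup (Fin (2 * n)) F)) :
    pRank 2 ↥(P : Subgroup (Matrix.SpecialLinearGroup (Fin (2 * n)) F)) = 2 * n - 1 := by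
  have hF : ringChar F ≠ 2 := by
    rw [Ne, FiniteField.even_card_iff_char_two, hc, ← Nat.even_iff]
    exact Nat.not_even_iff_odd.mpr hq
  have : Nonempty (Fin (2 * n)) := ⟨⟨0, by omega⟩⟩
  rw [pRank_sylow, pRank_specialLinearGroup hF, Fintype.card_fin]

/-- The 2-rank of `SL_{2n}(F)` over a finite field `F` of odd order `q` equals `2n - 1`. -/
theorem rank_SL (q n : ℕ) (hn : 1 ≤ n) (F : Type*) [Field F] [Fintype F]
    (hc : Fintype.card F = q) (hq : Odd q) (hpp : IsPrimePow q)
    (P : Sylow 2 (Matrix.SpecialLinearGroup (Fin (2 * n)) F)) :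
    pRank 2 ↥(P : Subgroup (Matrix.SpecialLinearGroup (Fin (2 * n)) F)) = 2 * n - 1 :=
  rank_SL_general q n hn F hc hq P
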